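/- Repeatedly applying the four transformation steps (positive split of sign sets containing F, negative split of sign sets containing F, positive M-elimination, negative M-elimination) to any finite set of heuristic conditions terminates, and in the resulting set every heuristic atom has sign set {F}, {T}, or {M, T}. -/
import Mathlib


inductive TV | T | M | F | U
deriving DecidableEq

/-- A heuristic atom: a sign set together with an atom. -/
abbrev HAtom (α : Type) := Finset TV × α

/-- A heuristic condition: a pair of finite multisets of heuristic atoms
(positive part, negative part). -/
abbrev Cond (α : Type) := Multiset (HAtom α) × Multiset (HAtom α)

/-- One step of the transformation on finite (multi)sets of heuristic conditions. -/
inductive Step {α : Type} [DecidableEq α] :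
    Multiset (Cond α) → Multiset (Cond α) → Prop
  | posSplit (Cp Cn : Multiset (HAtom α)) (Rest : Multiset (Cond α)) (s : Finset TV) (a : α)
      (hmem : (s, a) ∈ Cp) (hF : TV.F ∈ s) (hne : s ≠ {TV.F}) :
      Step ((Cp, Cn) ::ₘ Rest)
        (((s \ {TV.F}, a) ::ₘ Cp.erase (s, a), Cn) ::ₘ
         ((({TV.F} : Finset TV), a) ::ₘ Cp.erase (s, a), Cn) ::ₘ Rest)
  | negSplit (Cp Cn : Multiset (HAtom α)) (Rest : Multiset (Cond α)) (s : Finset TV) (a : α)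
      (hmem : (s, a) ∈ Cn) (hF : TV.F ∈ s) (hne : s ≠ {TV.F}) :
      Step ((Cp, Cn) ::ₘ Rest)
        ((Cp, (s \ {TV.F}, a) ::ₘ (({TV.F} : Finset TV), a) ::ₘ Cn.erase (s, a)) ::ₘ Rest)
  | posM (Cp Cn : Multiset (HAtom α)) (Rest : Multiset (Cond α)) (a : α)
      (hmem : (({TV.M} : Finset TV), a) ∈ Cp) :
      Step ((Cp, Cn) ::ₘ Rest)
        (((({TV.M, TV.T} : Finset TV), a) ::ₘ Cp.erase ({TV.M}, a),
          (({TV.T} : Finset TV), a) ::ₘ Cn) ::ₘ Rest)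
  | negM (Cp Cn : Multiset (HAtom α)) (Rest : Multiset (Cond α)) (a : α)
      (hmem : (({TV.M} : Finset TV), a) ∈ Cn) :
      Step ((Cp, Cn) ::ₘ Rest)
        (((({TV.F, TV.T} : Finset TV), a) ::ₘ Cp, Cn.erase ({TV.M}, a)) ::ₘ
         (Cp, (({TV.F, TV.M, TV.T} : Finset TV), a) ::ₘ Cn.erase ({TV.M}, a)) ::ₘ Rest)

-- auxiliary development
instance : Fintype TV :=
  ⟨{TV.T, TV.M, TV.F, TV.U}, by rintro ⟨⟩ <;> decide⟩

def tvW (s : Finset TV) : ℕ :=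
  if s = {TV.F} then 2
  else if TV.F ∈ s then 2 * (if s \ {TV.F} = {TV.M} then 15 else 2) + 3
  else if s = {TV.M} then 15 else 2

lemma tvW_key1 : ∀ s : Finset TV, TV.F ∈ s → s ≠ {TV.F} →
    tvW (s \ {TV.F}) + tvW {TV.F} < tvW s := by decide
lemma tvW_key2 : ∀ s : Finset TV, TV.F ∈ s → s ≠ {TV.F} →
    tvW (s \ {TV.F}) * tvW {TV.F} < tvW s := by decide
lemma tvW_key3 : tvW {TV.M, TV.T} * tvW {TV.T} < tvW {TV.M} := by decide
lemma tvW_key4 : tvW {TV.F, TV.T} + tvW {TV.F, TV.M, TV.T} < tvW {TV.M} := by decide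

lemma tvW_pos : ∀ s : Finset TV, 0 < tvW s := by decide

def condW {α : Type} (c : Cond α) : ℕ := ((c.1 + c.2).map fun ha => tvW ha.1).prod

def setW {α : Type} (N : Multiset (Cond α)) : ℕ := (N.map condW).sum

lemma prodW_pos {α : Type} (m : Multiset (HAtom α)) :
    0 < (m.map fun ha => tvW ha.1).prod := by
  refine Multiset.prod_pos ?_
  intro x hx
  obtain ⟨y, -, rfl⟩ := Multiset.mem_map.1 hx
  exact tvW_pos y.1

lemma step_decreases {α : Type} [DecidableEq α] {N N' : Multiset (Cond α)}
    (h : Step N N') : setW N' < setW N := by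
  cases h with
  | posSplit Cp Cn Rest s a hmem hF hne =>
    conv_rhs => rw [show Cp = (s, a) ::ₘ Cp.erase (s, a) from (Multiset.cons_erase hmem).symm]
    simp only [setW, condW, Multiset.map_cons, Multiset.sum_cons, Multiset.cons_add,
      Multiset.prod_cons]
    have hP := prodW_pos (Cp.erase (s, a) + Cn)
    have hk := mul_lt_mul_of_pos_right (tvW_key1 s hF hne) hP
    linarith
  | negSplit Cp Cn Rest s a hmem hF hne =>
    conv_rhs => rw [show Cn = (s, a) ::ₘ Cn.erase (s, a) from (Multiset.cons_erase hmem).symm]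
    simp only [setW, condW, Multiset.map_cons, Multiset.sum_cons, Multiset.cons_add,
      Multiset.add_cons, Multiset.prod_cons]
    have hP := prodW_pos (Cp + Cn.erase (s, a))
    have hk := mul_lt_mul_of_pos_right (tvW_key2 s hF hne) hP
    simp only [Multiset.map_add, Multiset.prod_add] at *
    nlinarith [hk, hP]
  | posM Cp Cn Rest a hmem =>
    conv_rhs => rw [show Cp = ({TV.M}, a) ::ₘ Cp.erase ({TV.M}, a) from
      (Multiset.cons_erase hmem).symm]
    simp only [setW, condW, Multiset.map_cons, Multiset.sum_cons, Multiset.cons_add,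
      Multiset.add_cons, Multiset.prod_cons, Multiset.map_add, Multiset.prod_add]
    have hP := prodW_pos (Cp.erase ({TV.M}, a))
    have hQ := prodW_pos Cn
    nlinarith [mul_lt_mul_of_pos_right tvW_key3 (mul_pos hP hQ)]
  | negM Cp Cn Rest a hmem =>
    conv_rhs => rw [show Cn = ({TV.M}, a) ::ₘ Cn.erase ({TV.M}, a) from
      (Multiset.cons_erase hmem).symm]
    simp only [setW, condW, Multiset.map_cons, Multiset.sum_cons, Multiset.cons_add,
      Multiset.add_cons, Multiset.prod_cons, Multiset.map_add, Multiset.prod_add]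
    have hP := prodW_pos Cp
    have hQ := prodW_pos (Cn.erase ({TV.M}, a))
    nlinarith [mul_lt_mul_of_pos_right tvW_key4 (mul_pos hP hQ)]

lemma fcases : ∀ s : Finset TV, s.Nonempty → TV.U ∉ s →
    s = {TV.F} ∨ s = {TV.T} ∨ s = {TV.M, TV.T} ∨ (TV.F ∈ s ∧ s ≠ {TV.F}) ∨ s = {TV.M} := by
  decide

/-- The transformation terminates (there is no infinite sequence of steps), and any set of
heuristic conditions with nonempty, `U`-free sign sets to which no step applies contains only
sign sets `{F}`, `{T}`, and `{M, T}`. -/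
theorem stmt11 {α : Type} [DecidableEq α] :
    (¬ ∃ f : ℕ → Multiset (Cond α), ∀ n, Step (f n) (f (n + 1))) ∧
    (∀ N : Multiset (Cond α),
        (∀ cond ∈ N, ∀ ha ∈ cond.1 + cond.2, (ha : HAtom α).1.Nonempty ∧ TV.U ∉ ha.1) →
        (¬ ∃ N', Step N N') →
        ∀ cond ∈ N, ∀ ha ∈ cond.1 + cond.2,
          (ha : HAtom α).1 = {TV.F} ∨ ha.1 = {TV.T} ∨ ha.1 = {TV.M, TV.T}) := by
  constructor
  · rintro ⟨f, hf⟩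
    have key : ∀ n, setW (f n) + n ≤ setW (f 0) := by
      intro n
      induction n with
      | zero => simp
      | succ n ih => have := step_decreases (hf n); omega
    have := key (setW (f 0) + 1); omega
  · intro N hN hstep cond hcond ha hha
    obtain ⟨Cp, Cn⟩ := cond
    obtain ⟨s, a⟩ := ha
    obtain ⟨hne, hU⟩ := hN (Cp, Cn) hcond (s, a) hha
    simp only at hne hU hha ⊢
    rcases fcases s hne hU with h | h | h | ⟨hF, hne'⟩ | h
    · exact Or.inl h
    · exact Or.inr (Or.inl h)
    · exact Or.inr (Or.inr h)
    · exfalso; apply hstep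
      rcases Multiset.mem_add.1 hha with hp | hn
      · have hs := Step.posSplit Cp Cn (N.erase (Cp, Cn)) s a hp hF hne'
        rw [Multiset.cons_erase hcond] at hs
        exact ⟨_, hs⟩
      · have hs := Step.negSplit Cp Cn (N.erase (Cp, Cn)) s a hn hF hne'
        rw [Multiset.cons_erase hcond] at hs
        exact ⟨_, hs⟩
    · subst h; exfalso; apply hstep
      rcases Multiset.mem_add.1 hha with hp | hn
      · have hs := Step.posM Cp Cn (N.erase (Cp, Cn)) a hp
        rw [Multiset.cons_erase hcond] at hs
        exact ⟨_, hs⟩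
      · have hs := Step.negM Cp Cn (N.erase (Cp, Cn)) a hn
        rw [Multiset.cons_erase hcond] at hs
        exact ⟨_, hs⟩
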